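/- arXiv:2412.05125 — 4 statements merged into one kernel-verified Lean document; each statement's English description precedes it below -/
import Mathlib

section
/- Let U and Ỹ be real Banach spaces, let K ⊆ Ỹ be a weakly sequentially closed subset, and let g : U × ℝ^n → Ỹ satisfy: whenever u_m ⇀ u weakly in U and z_m → z in ℝ^n, then g(u_m, z_m) ⇀ g(u, z) weakly in Ỹ. Let ζ be a random vector with values in ℝ^n on a probability space (Ω, 𝒜, ℙ). Then for every u ∈ U the set {z ∈ ℝ^n : g(u, z) ∈ K} is closed (hence Borel), so the probability function φ̃(u) := ℙ(g(u, ζ) ∈ K) is well-defined, and φ̃ is weakly sequentially upper semicontinuous: for every ū ∈ U and every sequence (u_m) with u_m ⇀ ū weakly, limsup_{m→∞} φ̃(u_m) ≤ φ̃(ū). -/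
/-!
If `z_m → z` and `g(u, z_m) ∈ K`, then `g(u, z_m) ⇀ g(u, z)`, so `g(u, z) ∈ K`: the section
`{z | g(u, z) ∈ K}` is sequentially closed, hence closed in `ℝⁿ`. For the upper
semicontinuity, every `ω` lying in infinitely many of the events `{g(u_m, ζ) ∈ K}` satisfies
`g(ū, ζ ω) ∈ K`, because `g(u_m, ζ ω) ⇀ g(ū, ζ ω)` along the corresponding subsequence. So the
`limsup` of the events is contained in `{g(ū, ζ) ∈ K}`, and the reverse Fatou inequality
`limsup ℙ(A_m) ≤ ℙ(limsup A_m)` for a finite measure concludes.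
-/

open MeasureTheory Filter

/-- Weak sequential convergence in a normed space: `f (x m) → f x` for every continuous
linear functional `f`. -/
def WeakSeqConv {X : Type*} [NormedAddCommGroup X] [NormedSpace ℝ X]
    (x : ℕ → X) (x₀ : X) : Prop :=
  ∀ f : X →L[ℝ] ℝ, Tendsto (fun m => f (x m)) atTop (nhds (f x₀))

open Set

namespace WeakSeqConv

variable {X : Type*} [NormedAddCommGroup X] [NormedSpace ℝ X]

theorem const (x : X) : WeakSeqConv (fun _ => x) x := fun _ => tendsto_const_nhds

theorem comp_tendsto {x : ℕ → X} {x₀ : X} (hx : WeakSeqConv x x₀) {φ : ℕ → ℕ}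
    (hφ : Tendsto φ atTop atTop) : WeakSeqConv (x ∘ φ) x₀ :=
  fun f => (hx f).comp hφ

end WeakSeqConv

def IsWeakSeqClosed {X : Type*} [NormedAddCommGroup X] [NormedSpace ℝ X] (K : Set X) : Prop :=
  ∀ (y : ℕ → X) (y₀ : X), (∀ m, y m ∈ K) → WeakSeqConv y y₀ → y₀ ∈ K

namespace IsWeakSeqClosed

variable {X : Type*} [NormedAddCommGroup X] [NormedSpace ℝ X] {K : Set X}

theorem mem_of_frequently (hK : IsWeakSeqClosed K) {y : ℕ → X} {y₀ : X}
    (hy : WeakSeqConv y y₀) (hfreq : ∃ᶠ m in atTop, y m ∈ K) : y₀ ∈ K := by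
  obtain ⟨φ, hφ, hφK⟩ := extraction_of_frequently_atTop hfreq
  exact hK (y ∘ φ) y₀ hφK (hy.comp_tendsto hφ.tendsto_atTop)

theorem isClosed_preimage (hK : IsWeakSeqClosed K) {Z : Type*} [TopologicalSpace Z]
    [SequentialSpace Z] {h : Z → X}
    (hh : ∀ (z : ℕ → Z) (z₀ : Z), Tendsto z atTop (nhds z₀) → WeakSeqConv (h ∘ z) (h z₀)) :
    IsClosed (h ⁻¹' K) :=
  IsSeqClosed.isClosed fun z z₀ hzK hz => hK (h ∘ z) (h z₀) hzK (hh z z₀ hz)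

end IsWeakSeqClosed

theorem MeasureTheory.limsup_measure_le_measure_limsup {α : Type*} [MeasurableSpace α]
    {μ : Measure α} [IsFiniteMeasure μ] {s : ℕ → Set α} (hs : ∀ m, NullMeasurableSet (s m) μ) :
    limsup (fun m => μ (s m)) atTop ≤ μ (limsup s atTop) := by
  have htail_anti : Antitone fun N => ⋃ m ≥ N, s m := fun _ _ hNM =>
    biUnion_subset_biUnion_left fun _ hm => le_trans hNM hm
  have htail_meas : ∀ N, NullMeasurableSet (⋃ m ≥ N, s m) μ := fun N =>
    .biUnion (to_countable _) fun m _ => hs m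
  calc limsup (fun m => μ (s m)) atTop
      = ⨅ N, ⨆ m ≥ N, μ (s m) := limsup_eq_iInf_iSup_of_nat
    _ ≤ ⨅ N, μ (⋃ m ≥ N, s m) :=
        iInf_mono fun N => iSup₂_le fun m hm => measure_mono (subset_biUnion_of_mem hm)
    _ = μ (⋂ N, ⋃ m ≥ N, s m) :=
        (htail_anti.measure_iInter htail_meas ⟨0, measure_ne_top μ _⟩).symm
    _ = μ (limsup s atTop) := by
        simp only [limsup_eq_iInf_iSup_of_nat, iSup_eq_iUnion, iInf_eq_iInter]

theorem probability_function_weakly_seq_usc_general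
    {U Ytil : Type*} [NormedAddCommGroup U] [NormedSpace ℝ U]
    [NormedAddCommGroup Ytil] [NormedSpace ℝ Ytil] {n : ℕ}
    (K : Set Ytil)
    (hK : ∀ (y : ℕ → Ytil) (y₀ : Ytil), (∀ m, y m ∈ K) → WeakSeqConv y y₀ → y₀ ∈ K)
    (g : U → (Fin n → ℝ) → Ytil)
    (hg : ∀ (u : ℕ → U) (u₀ : U) (z : ℕ → (Fin n → ℝ)) (z₀ : Fin n → ℝ),
      WeakSeqConv u u₀ → Tendsto z atTop (nhds z₀) →
      WeakSeqConv (fun m => g (u m) (z m)) (g u₀ z₀))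
    {Ω : Type*} [MeasurableSpace Ω] (P : Measure Ω) [IsProbabilityMeasure P]
    (ζ : Ω → (Fin n → ℝ)) (hζ : Measurable ζ) :
    (∀ u : U, IsClosed {z : Fin n → ℝ | g u z ∈ K}) ∧
    (∀ (ubar : U) (u : ℕ → U), WeakSeqConv u ubar →
      limsup (fun m => P {ω | g (u m) (ζ ω) ∈ K}) atTop ≤ P {ω | g ubar (ζ ω) ∈ K}) := by
  have hK' : IsWeakSeqClosed K := hK
  have hclosed : ∀ u : U, IsClosed {z : Fin n → ℝ | g u z ∈ K} := fun u =>
    hK'.isClosed_preimage fun z z₀ hz => hg _ u z z₀ (.const u) hz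
  refine ⟨hclosed, fun ubar u hu => ?_⟩
  have hevents : ∀ m, NullMeasurableSet {ω | g (u m) (ζ ω) ∈ K} P := fun m =>
    ((hclosed (u m)).measurableSet.preimage hζ).nullMeasurableSet
  have hlimsup : limsup (fun m => {ω | g (u m) (ζ ω) ∈ K}) atTop ⊆ {ω | g ubar (ζ ω) ∈ K} :=
    fun ω hω => hK'.mem_of_frequently (hg u ubar _ _ hu tendsto_const_nhds)
      (mem_limsup_iff_frequently_mem.1 hω)
  exact (limsup_measure_le_measure_limsup hevents).trans (measure_mono hlimsup)

/-- If `K` is weakly sequentially closed and `g` maps weakly convergent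
sequences in `U` together with convergent sequences in `ℝⁿ` to weakly convergent sequences
in `Ỹ`, then for every `u` the set `{z | g u z ∈ K}` is closed, and the probability
function `φ̃(u) = ℙ(g (u, ζ) ∈ K)` is weakly sequentially upper semicontinuous. -/
theorem probability_function_weakly_seq_usc
    {U Ytil : Type*} [NormedAddCommGroup U] [NormedSpace ℝ U] [CompleteSpace U]
    [NormedAddCommGroup Ytil] [NormedSpace ℝ Ytil] [CompleteSpace Ytil] {n : ℕ}
    (K : Set Ytil)
    (hK : ∀ (y : ℕ → Ytil) (y₀ : Ytil), (∀ m, y m ∈ K) → WeakSeqConv y y₀ → y₀ ∈ K)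
    (g : U → (Fin n → ℝ) → Ytil)
    (hg : ∀ (u : ℕ → U) (u₀ : U) (z : ℕ → (Fin n → ℝ)) (z₀ : Fin n → ℝ),
      WeakSeqConv u u₀ → Tendsto z atTop (nhds z₀) →
      WeakSeqConv (fun m => g (u m) (z m)) (g u₀ z₀))
    {Ω : Type*} [MeasurableSpace Ω] (P : Measure Ω) [IsProbabilityMeasure P]
    (ζ : Ω → (Fin n → ℝ)) (hζ : Measurable ζ) :
    (∀ u : U, IsClosed {z : Fin n → ℝ | g u z ∈ K}) ∧
    (∀ (ubar : U) (u : ℕ → U), WeakSeqConv u ubar →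
      limsup (fun m => P {ω | g (u m) (ζ ω) ∈ K}) atTop ≤ P {ω | g ubar (ζ ω) ∈ K}) :=
  probability_function_weakly_seq_usc_general K hK g hg P ζ hζ
end

section
/- Let (Ω, 𝒜, ℙ) be a probability space and let T : Ω → ℝ be an integrable random variable such that for real constants a, b with 0 ≤ a and b ≤ 1 one has a ≤ T(ω) ≤ b and 0 ≤ T(ω) ≤ 1 for ℙ-almost every ω. Set p := 𝔼[T]. Then Var(T) ≤ min{ (1−p)(p−a), p(b−p) }. -/
open MeasureTheory

/-- If `T` is an integrable random variable on a probability space with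
`a ≤ T ≤ b` a.s. (where `0 ≤ a`, `b ≤ 1`) and `0 ≤ T ≤ 1` a.s., and `p = 𝔼[T]`, then
`Var(T) ≤ min ((1 - p)(p - a)) (p(b - p))`. -/
theorem variance_le_min_of_bounds
    {Ω : Type*} [MeasurableSpace Ω] (P : Measure Ω) [IsProbabilityMeasure P]
    (T : Ω → ℝ) (hTint : Integrable T P)
    (a b : ℝ) (ha : 0 ≤ a) (hb : b ≤ 1)
    (hab : ∀ᵐ ω ∂P, a ≤ T ω ∧ T ω ≤ b)
    (h01 : ∀ᵐ ω ∂P, 0 ≤ T ω ∧ T ω ≤ 1)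
    (p : ℝ) (hp : p = ∫ ω, T ω ∂P) :
    ProbabilityTheory.variance T P ≤ min ((1 - p) * (p - a)) (p * (b - p)) := by
  have hmem : MemLp T 2 P := by
    refine MemLp.of_bound hTint.aestronglyMeasurable 1 (h01.mono fun ω h => ?_)
    rw [Real.norm_eq_abs, abs_le]; exact ⟨by linarith [h.1], h.2⟩
  have hT2 : Integrable (fun ω => T ω ^ 2) P := hmem.integrable_sq
  have hvar := ProbabilityTheory.variance_eq_sub hmem
  have e1 : ∫ ω, (T ω - a) * (1 - T ω) ∂P
      = (∫ ω, T ω ∂P) - (∫ ω, T ω ^ 2 ∂P) - a + a * ∫ ω, T ω ∂P := by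
    have h : (fun ω => (T ω - a) * (1 - T ω))
        = fun ω => (T ω - T ω ^ 2) + a * (T ω - 1) := by ext ω; ring
    have i1 : Integrable (fun ω => T ω - T ω ^ 2) P := hTint.sub hT2
    have i2 : Integrable (fun ω => a * (T ω - 1)) P :=
      (hTint.sub (integrable_const 1) : Integrable (fun ω => T ω - 1) P).const_mul a
    rw [h, integral_add i1 i2, integral_sub hTint hT2, integral_const_mul,
      integral_sub hTint (integrable_const 1), integral_const]
    simp [measure_univ]; ring
  have e2 : ∫ ω, T ω * (b - T ω) ∂P
      = b * (∫ ω, T ω ∂P) - ∫ ω, T ω ^ 2 ∂P := by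
    have h : (fun ω => T ω * (b - T ω)) = fun ω => b * T ω - T ω ^ 2 := by ext ω; ring
    have i3 : Integrable (fun ω => b * T ω) P := hTint.const_mul b
    rw [h, integral_sub i3 hT2, integral_const_mul]
  have k1 : 0 ≤ ∫ ω, (T ω - a) * (1 - T ω) ∂P := by
    refine integral_nonneg_of_ae ((hab.and h01).mono fun ω ⟨h1, h2⟩ => ?_)
    exact mul_nonneg (by linarith [h1.1]) (by linarith [h2.2])
  have k2 : 0 ≤ ∫ ω, T ω * (b - T ω) ∂P := by
    refine integral_nonneg_of_ae ((hab.and h01).mono fun ω ⟨h1, h2⟩ => ?_)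
    exact mul_nonneg h2.1 (by linarith [h1.2])
  have hvar' : ProbabilityTheory.variance T P = (∫ ω, T ω ^ 2 ∂P) - p ^ 2 := by
    rw [hvar, hp]; rfl
  refine le_min ?_ ?_ <;> rw [hvar', hp] <;> nlinarith [k1, k2, e1, e2]
end

section
/- Let n ≥ 1, let γₙ be the standard Gaussian probability measure on ℝⁿ, let σ be the uniform probability measure on the unit sphere S^{n−1}, and define F : [0,∞] → [0,1] by F(r) := γₙ({x ∈ ℝⁿ : ‖x‖ ≤ r}) for r < ∞ and F(∞) := 1. Let M ⊆ ℝⁿ be a Borel set that is radially closed and star-shaped about the origin in the sense that there exists a Borel measurable function ρ : S^{n−1} → [0,∞] such that for every v ∈ S^{n−1}, {r ∈ [0,∞) : r·v ∈ M} = {r ∈ [0,∞) : r ≤ ρ(v)}. Then γₙ(M) = ∫_{S^{n−1}} F(ρ(v)) dσ(v). -/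
open MeasureTheory Metric
open scoped ENNReal

/-- The standard Gaussian measure on `ℝⁿ` (Euclidean space), the `n`-fold product of
`N(0,1)` transported to `EuclideanSpace ℝ (Fin n)`. -/
noncomputable def stdGaussianE (n : ℕ) : Measure (EuclideanSpace ℝ (Fin n)) :=
  (Measure.pi fun _ : Fin n => ProbabilityTheory.gaussianReal 0 1).map
    (MeasurableEquiv.toLp 2 (Fin n → ℝ))

/-- The uniform probability measure on the unit sphere `S^{n-1} ⊆ ℝⁿ`: the normalized
cone (surface) measure obtained from Lebesgue measure on Euclidean space. -/
noncomputable def uniformSphereMeasure (n : ℕ) :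
    Measure (sphere (0 : EuclideanSpace ℝ (Fin n)) 1) :=
  ((volume : Measure (EuclideanSpace ℝ (Fin n))).toSphere Set.univ)⁻¹ •
    (volume : Measure (EuclideanSpace ℝ (Fin n))).toSphere

/-- The radial distribution function `F(r) = γₙ({‖x‖ ≤ r})` (the Chi distribution
function with `n` degrees of freedom), with the convention `F(∞) = 1`. -/
noncomputable def chiCDF (n : ℕ) (r : ℝ≥0∞) : ℝ≥0∞ :=
  if r = ⊤ then 1 else stdGaussianE n {x : EuclideanSpace ℝ (Fin n) | ‖x‖ ≤ r.toReal}


section Aux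
open ProbabilityTheory Real Set

lemma lintegral_pi_prod {n : ℕ} (μ : Measure ℝ) [SigmaFinite μ]
    (g : Fin n → ℝ → ℝ≥0∞) (hg : ∀ i, Measurable (g i)) :
    ∫⁻ x : Fin n → ℝ, ∏ i, g i (x i) ∂(Measure.pi fun _ => μ) = ∏ i, ∫⁻ y, g i y ∂μ := by
  induction n with
  | zero => simp [lintegral_const, Measure.pi_univ]
  | succ m ih =>
    have hF : Measurable fun x : Fin (m+1) → ℝ => ∏ i, g i (x i) :=
      Finset.measurable_prod _ fun i _ => (hg i).comp (measurable_pi_apply i)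
    have mp := (measurePreserving_piFinSuccAbove (fun _ : Fin (m+1) => μ) 0).symm
    rw [← mp.lintegral_comp hF]
    have : ∀ p : ℝ × (Fin m → ℝ),
        (∏ i, g i (((MeasurableEquiv.piFinSuccAbove (fun _ => ℝ) 0).symm p) i))
          = g 0 p.1 * ∏ j, g ((0 : Fin (m+1)).succAbove j) (p.2 j) := by
      intro p
      rw [Fin.prod_univ_succAbove _ 0]
      simp [MeasurableEquiv.piFinSuccAbove]
    calc ∫⁻ p, (∏ i, g i (((MeasurableEquiv.piFinSuccAbove (fun _ => ℝ) 0).symm p) i))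
          ∂(μ.prod (Measure.pi fun _ => μ))
        = ∫⁻ p : ℝ × (Fin m → ℝ), g 0 p.1 * ∏ j, g ((0 : Fin (m+1)).succAbove j) (p.2 j)
          ∂(μ.prod (Measure.pi fun _ => μ)) := lintegral_congr this
      _ = (∫⁻ y, g 0 y ∂μ) * ∫⁻ x : Fin m → ℝ, ∏ j, g ((0 : Fin (m+1)).succAbove j) (x j)
          ∂(Measure.pi fun _ => μ) :=
          lintegral_prod_mul (hg 0).aemeasurable
            (Finset.measurable_prod _ fun j _ =>
              (hg _).comp (measurable_pi_apply j)).aemeasurable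
      _ = ∏ i, ∫⁻ y, g i y ∂μ := by
          rw [ih _ fun j => hg _, ← Fin.prod_univ_succAbove (fun i => ∫⁻ y, g i y ∂μ) 0]

lemma map_withDensity_equiv {α β : Type*} [MeasurableSpace α] [MeasurableSpace β]
    (e : α ≃ᵐ β) (μ : Measure α) (f : α → ℝ≥0∞) (hf : Measurable f) :
    (μ.withDensity f).map e = (μ.map e).withDensity (f ∘ e.symm) := by
  ext s hs
  rw [e.map_apply, withDensity_apply _ (e.measurable hs), withDensity_apply _ hs,
    Measure.restrict_map e.measurable hs,
    lintegral_map (hf.comp e.symm.measurable) e.measurable]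
  simp

noncomputable def gaussDens (n : ℕ) (r : ℝ) : ℝ≥0∞ :=
  ENNReal.ofReal ((Real.sqrt (2 * Real.pi))⁻¹ ^ n * Real.exp (-(r ^ 2) / 2))

lemma measurable_gaussDens (n : ℕ) : Measurable (gaussDens n) :=
  (measurable_const.mul ((measurable_id.pow_const 2).neg.div_const 2).exp).ennreal_ofReal

lemma pi_gaussian_withDensity (n : ℕ) :
    (Measure.pi fun _ : Fin n => gaussianReal 0 1)
      = (volume : Measure (Fin n → ℝ)).withDensity
          (fun x => ∏ i, gaussianPDF 0 1 (x i)) := by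
  refine Measure.pi_eq (μ := fun _ : Fin n => gaussianReal 0 1) fun s hs => ?_
  rw [withDensity_apply _ (MeasurableSet.univ_pi hs),
    ← lintegral_indicator (MeasurableSet.univ_pi hs)]
  have hpt : ∀ x : Fin n → ℝ,
      (Set.univ.pi s).indicator (fun x => ∏ i, gaussianPDF 0 1 (x i)) x
        = ∏ i, (s i).indicator (gaussianPDF 0 1) (x i) := by
    intro x
    by_cases hx : x ∈ Set.univ.pi s
    · rw [Set.indicator_of_mem hx]
      exact Finset.prod_congr rfl fun i _ =>
        (Set.indicator_of_mem (hx i (Set.mem_univ i)) _).symm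
    · rw [Set.indicator_of_notMem hx]
      simp only [Set.mem_pi, Set.mem_univ, forall_true_left, not_forall] at hx
      obtain ⟨j, hj⟩ := hx
      exact (Finset.prod_eq_zero (Finset.mem_univ j)
        (by rw [Set.indicator_of_notMem hj])).symm
  rw [lintegral_congr hpt, volume_pi,
    lintegral_pi_prod volume _ fun i => (measurable_gaussianPDF 0 1).indicator (hs i)]
  refine Finset.prod_congr rfl fun i _ => ?_
  rw [lintegral_indicator (hs i), gaussianReal_of_var_ne_zero _ one_ne_zero,
    withDensity_apply _ (hs i)]

lemma prod_gaussianPDF_eq (n : ℕ) (x : EuclideanSpace ℝ (Fin n)) :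
    ∏ i, gaussianPDF 0 1 (x i) = gaussDens n ‖x‖ := by
  rw [gaussDens]
  simp only [gaussianPDF]
  rw [← ENNReal.ofReal_prod_of_nonneg (fun i _ => gaussianPDFReal_nonneg 0 1 (x i))]
  congr 1
  simp only [gaussianPDFReal, NNReal.coe_one, mul_one, sub_zero]
  rw [Finset.prod_mul_distrib, Finset.prod_const, Finset.card_univ, Fintype.card_fin,
    ← Real.exp_sum]
  congr 2
  · have hnorm : ‖x‖ ^ 2 = ∑ i, x i ^ 2 := by
      rw [EuclideanSpace.norm_eq, Real.sq_sqrt (Finset.sum_nonneg fun i _ => sq_nonneg _)]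
      simp [sq_abs]
    rw [hnorm, ← Finset.sum_div, Finset.sum_neg_distrib]

lemma stdGaussianE_eq_withDensity (n : ℕ) :
    stdGaussianE n = (volume : Measure (EuclideanSpace ℝ (Fin n))).withDensity
      (fun x => gaussDens n ‖x‖) := by
  have hmp : MeasurePreserving (MeasurableEquiv.toLp 2 (Fin n → ℝ)) :=
    (EuclideanSpace.volume_preserving_symm_measurableEquiv_toLp (Fin n)).symm
  rw [stdGaussianE, pi_gaussian_withDensity,
    map_withDensity_equiv (MeasurableEquiv.toLp 2 (Fin n → ℝ)) _
      (fun x => ∏ i, gaussianPDF 0 1 (x i))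
      (Finset.measurable_prod _ fun i _ =>
        (measurable_gaussianPDF 0 1).comp (measurable_pi_apply i)),
    hmp.map_eq]
  congr 1
  ext x
  simp only [Function.comp, MeasurableEquiv.symm_symm]
  exact prod_gaussianPDF_eq n x

end Aux

noncomputable def radialCDF (n : ℕ) (t : ℝ≥0∞) : ℝ≥0∞ :=
  ∫⁻ r : Set.Ioi (0 : ℝ), Set.indicator {r : Set.Ioi (0 : ℝ) | ENNReal.ofReal r.1 ≤ t}
    (fun r => gaussDens n r.1) r ∂(Measure.volumeIoiPow (n - 1))

lemma stdGaussianE_polar (n : ℕ) (hn : 1 ≤ n) (M : Set (EuclideanSpace ℝ (Fin n)))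
    (hM : MeasurableSet M) (ρ : sphere (0 : EuclideanSpace ℝ (Fin n)) 1 → ℝ≥0∞)
    (hstar : ∀ v : sphere (0 : EuclideanSpace ℝ (Fin n)) 1, ∀ r : ℝ, 0 < r →
      (r • (v : EuclideanSpace ℝ (Fin n)) ∈ M ↔ ENNReal.ofReal r ≤ ρ v)) :
    stdGaussianE n M = ∫⁻ v, radialCDF n (ρ v)
      ∂((volume : Measure (EuclideanSpace ℝ (Fin n))).toSphere) := by
  haveI : Nontrivial (EuclideanSpace ℝ (Fin n)) := by
    refine Module.nontrivial_of_finrank_pos (R := ℝ) ?_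
    rw [finrank_euclideanSpace_fin]
    omega
  set f : (EuclideanSpace ℝ (Fin n)) → ℝ≥0∞ := fun y => gaussDens n ‖y‖ with hf_def
  have hfmeas : Measurable f := (measurable_gaussDens n).comp measurable_norm
  rw [stdGaussianE_eq_withDensity, withDensity_apply _ hM]
  have h0c : MeasurableSet ({0}ᶜ : Set (EuclideanSpace ℝ (Fin n))) := (measurableSet_singleton 0).compl
  have hae : M.indicator f =ᵐ[(volume : Measure (EuclideanSpace ℝ (Fin n)))] ({0}ᶜ ∩ M).indicator f := by
    filter_upwards [compl_mem_ae_iff.2 (measure_singleton (0 : (EuclideanSpace ℝ (Fin n))))] with x hx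
    by_cases hxM : x ∈ M
    · rw [Set.indicator_of_mem hxM, Set.indicator_of_mem (Set.mem_inter hx hxM)]
    · rw [Set.indicator_of_notMem hxM, Set.indicator_of_notMem (fun h => hxM h.2)]
  rw [← lintegral_indicator hM, lintegral_congr_ae hae, ← Set.indicator_indicator,
    lintegral_indicator h0c, ← lintegral_subtype_comap h0c]
  have mp := (volume : Measure (EuclideanSpace ℝ (Fin n))).measurePreserving_homeomorphUnitSphereProd
  rw [finrank_euclideanSpace_fin] at mp
  set F : sphere (0 : (EuclideanSpace ℝ (Fin n))) 1 × Set.Ioi (0 : ℝ) → ℝ≥0∞ :=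
    fun p => M.indicator f (p.2.1 • p.1.1) with hF_def
  have hFmeas : Measurable F := by
    have hsmul : Measurable fun p : sphere (0 : (EuclideanSpace ℝ (Fin n))) 1 × Set.Ioi (0 : ℝ) => p.2.1 • p.1.1 :=
      ((continuous_subtype_val.comp continuous_snd).smul
        (continuous_subtype_val.comp continuous_fst)).measurable
    exact (hfmeas.indicator hM).comp hsmul
  have hcomp : ∀ x : ({0}ᶜ : Set (EuclideanSpace ℝ (Fin n))), M.indicator f x.1 = F (homeomorphUnitSphereProd (EuclideanSpace ℝ (Fin n)) x) := by
    intro x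
    rw [hF_def]
    have : ((homeomorphUnitSphereProd (EuclideanSpace ℝ (Fin n)) x).2.1 : ℝ) • ((homeomorphUnitSphereProd (EuclideanSpace ℝ (Fin n)) x).1.1 : (EuclideanSpace ℝ (Fin n)))
        = ((homeomorphUnitSphereProd (EuclideanSpace ℝ (Fin n))).symm (homeomorphUnitSphereProd (EuclideanSpace ℝ (Fin n)) x) : (EuclideanSpace ℝ (Fin n))) := by
      rw [homeomorphUnitSphereProd_symm_apply_coe]
    simp only [this, Homeomorph.symm_apply_apply]
  rw [lintegral_congr hcomp, mp.lintegral_comp hFmeas, lintegral_prod F hFmeas.aemeasurable]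
  refine lintegral_congr fun v => ?_
  rw [radialCDF]
  refine lintegral_congr fun r => ?_
  have hnorm : ‖(r.1 : ℝ) • (v : (EuclideanSpace ℝ (Fin n)))‖ = r.1 := by
    rw [norm_smul, mem_sphere_zero_iff_norm.1 v.2, mul_one, Real.norm_eq_abs,
      abs_of_pos r.2]
  by_cases hr : ENNReal.ofReal r.1 ≤ ρ v
  · show M.indicator f ((r : ℝ) • (v : EuclideanSpace ℝ (Fin n))) = _
    rw [Set.indicator_of_mem ((hstar v r.1 r.2).2 hr),
      Set.indicator_of_mem (show r ∈ {r : Set.Ioi (0:ℝ) | ENNReal.ofReal r.1 ≤ ρ v} from hr)]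
    rw [hf_def]
    simp only [hnorm]
  · show M.indicator f ((r : ℝ) • (v : EuclideanSpace ℝ (Fin n))) = _
    rw [Set.indicator_of_notMem (fun hmem => hr ((hstar v r.1 r.2).1 hmem)),
      Set.indicator_of_notMem (show r ∉ {r : Set.Ioi (0:ℝ) | ENNReal.ofReal r.1 ≤ ρ v} from hr)]

lemma stdGaussianE_univ (n : ℕ) : stdGaussianE n Set.univ = 1 := by
  rw [stdGaussianE, MeasurableEquiv.map_apply]
  simp

lemma chiCDF_eq_radialCDF (n : ℕ) (hn : 1 ≤ n) (t : ℝ≥0∞) :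
    chiCDF n t = radialCDF n t *
      (volume : Measure (EuclideanSpace ℝ (Fin n))).toSphere Set.univ := by
  by_cases ht : t = ⊤
  · subst ht
    rw [chiCDF, if_pos rfl]
    have h := stdGaussianE_polar n hn Set.univ MeasurableSet.univ (fun _ => ⊤)
      (fun v r hr => by simp)
    rw [stdGaussianE_univ, lintegral_const] at h
    exact h
  · rw [chiCDF, if_neg ht]
    have h := stdGaussianE_polar n hn {x : EuclideanSpace ℝ (Fin n) | ‖x‖ ≤ t.toReal}
      (measurableSet_le measurable_norm measurable_const) (fun _ => t) (fun v r hr => ?_)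
    · rw [h, lintegral_const]
    · have hnorm : ‖r • (v : EuclideanSpace ℝ (Fin n))‖ = r := by
        rw [norm_smul, mem_sphere_zero_iff_norm.1 v.2, mul_one, Real.norm_eq_abs,
          abs_of_pos hr]
      rw [Set.mem_setOf_eq, hnorm, ENNReal.ofReal_le_iff_le_toReal ht]


/-- spherical-radial decomposition of the standard Gaussian measure of a
radially closed star-shaped Borel set: `γₙ(M) = ∫_{S^{n-1}} F(ρ(v)) dσ(v)`. -/
theorem gaussian_measure_spherical_radial (n : ℕ) (hn : 1 ≤ n)
    (M : Set (EuclideanSpace ℝ (Fin n))) (hM : MeasurableSet M)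
    (ρ : sphere (0 : EuclideanSpace ℝ (Fin n)) 1 → ℝ≥0∞) (hρ : Measurable ρ)
    (hstar : ∀ v : sphere (0 : EuclideanSpace ℝ (Fin n)) 1, ∀ r : ℝ, 0 ≤ r →
      (r • (v : EuclideanSpace ℝ (Fin n)) ∈ M ↔ ENNReal.ofReal r ≤ ρ v)) :
    stdGaussianE n M = ∫⁻ v, chiCDF n (ρ v) ∂(uniformSphereMeasure n) := by
  haveI : Nontrivial (EuclideanSpace ℝ (Fin n)) := by
    refine Module.nontrivial_of_finrank_pos (R := ℝ) ?_
    rw [finrank_euclideanSpace_fin]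
    omega
  set S := (volume : Measure (EuclideanSpace ℝ (Fin n))).toSphere Set.univ with hS
  have hS_ne_top : S ≠ ⊤ := measure_ne_top _ _
  have hS_ne_zero : S ≠ 0 := by
    rw [hS, MeasureTheory.Measure.toSphere_apply_univ, finrank_euclideanSpace_fin]
    exact mul_ne_zero (Nat.cast_ne_zero.2 (by omega))
      (measure_ball_pos _ _ one_pos).ne'
  rw [stdGaussianE_polar n hn M hM ρ (fun v r hr => hstar v r hr.le), uniformSphereMeasure,
    lintegral_smul_measure, lintegral_congr fun v => chiCDF_eq_radialCDF n hn (ρ v),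
    lintegral_mul_const' S _ hS_ne_top, mul_comm _ S, smul_eq_mul, ← mul_assoc,
    ENNReal.inv_mul_cancel hS_ne_zero hS_ne_top, one_mul]
end

section
/- Let U be a real Banach space, n, k ≥ 1, p ≥ 1, N ≥ 1. For j = 1,…,p let c_j ∈ ℝ, A_j : U → ℝ continuous linear functionals, b_j ∈ ℝⁿ, and define g_j(u, z) := c_j + A_j(u) + ⟨b_j, z⟩. Let m ∈ ℝⁿ, let L : ℝᵏ → ℝⁿ be linear, and for v ∈ S^{k−1} set d_j(v) := ⟨b_j, Lv⟩. Fix ū ∈ U with g_j(ū, m) < 0 for all j (Slater condition); for u near ū define ρ_j(u, v) := −g_j(u, m)/d_j(v) if d_j(v) > 0 and ρ_j(u, v) := ∞ otherwise, and ρ(u, v) := min_{1≤j≤p} ρ_j(u, v). Let F : ℝ → ℝ be continuously differentiable and nondecreasing with 0 ≤ F ≤ 1, f := F′, and adopt the convention F(∞) := 1. Given points v₁,…,v_N ∈ S^{k−1}, define φ̃(u) := N^{−1} Σ_{i=1}^N F(ρ(u, v_i)). Assume that for every i with ρ(ū, v_i) < ∞ there is a unique index j_i with ρ(ū, v_i)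 = ρ_{j_i}(ū, v_i). Then φ̃ is Fréchet differentiable at ū with derivative Dφ̃(ū) = −N^{−1} Σ_{i : ρ(ū, v_i) < ∞} ( f(ρ_{j_i}(ū, v_i)) / d_{j_i}(v_i) ) · A_{j_i}. -/
open scoped RealInnerProductSpace ENNReal
open Classical

/-- differentiability of the sample-based spherical-radial approximation of
the probability function for affine constraint functions, with explicit Fréchet
derivative (Proposition 3.4 of the paper, affine case). -/
theorem srd_probability_function_frechet_deriv
    {U : Type*} [NormedAddCommGroup U] [NormedSpace ℝ U] [CompleteSpace U]
    {n k p N : ℕ} (hn : 1 ≤ n) (hk : 1 ≤ k) (hp : 1 ≤ p) (hN : 1 ≤ N)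
    (c : Fin p → ℝ) (A : Fin p → (U →L[ℝ] ℝ)) (b : Fin p → EuclideanSpace ℝ (Fin n))
    (m : EuclideanSpace ℝ (Fin n))
    (L : EuclideanSpace ℝ (Fin k) →ₗ[ℝ] EuclideanSpace ℝ (Fin n))
    (g : Fin p → U → EuclideanSpace ℝ (Fin n) → ℝ)
    (hg : ∀ j u z, g j u z = c j + A j u + ⟪b j, z⟫)
    (d : Fin p → EuclideanSpace ℝ (Fin k) → ℝ)
    (hd : ∀ j v, d j v = ⟪b j, L v⟫)
    (ρj : Fin p → U → EuclideanSpace ℝ (Fin k) → ℝ≥0∞)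
    (hρj : ∀ j u v, ρj j u v =
      if 0 < d j v then ENNReal.ofReal (-(g j u m) / d j v) else ⊤)
    (ρ : U → EuclideanSpace ℝ (Fin k) → ℝ≥0∞)
    (hρ : ∀ u v, ρ u v = ⨅ j, ρj j u v)
    (ubar : U) (hslater : ∀ j, g j ubar m < 0)
    (F : ℝ → ℝ) (hF : ContDiff ℝ 1 F) (hFmono : Monotone F)
    (hF01 : ∀ t, 0 ≤ F t ∧ F t ≤ 1)
    (f : ℝ → ℝ) (hf : f = deriv F)
    (Fext : ℝ≥0∞ → ℝ) (hFext : ∀ r : ℝ≥0∞, Fext r = if r = ⊤ then 1 else F r.toReal)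
    (v : Fin N → EuclideanSpace ℝ (Fin k)) (hv : ∀ i, ‖v i‖ = 1)
    (φ : U → ℝ) (hφ : ∀ u, φ u = (N : ℝ)⁻¹ * ∑ i, Fext (ρ u (v i)))
    (huniq : ∀ i, ρ ubar (v i) ≠ ⊤ → ∃! j, ρ ubar (v i) = ρj j ubar (v i))
    (jf : Fin N → Fin p)
    (hjf : ∀ i, ρ ubar (v i) ≠ ⊤ → ρ ubar (v i) = ρj (jf i) ubar (v i)) :
    HasFDerivAt φ
      (-(N : ℝ)⁻¹ • ∑ i ∈ Finset.univ.filter (fun i => ρ ubar (v i) ≠ ⊤),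
        ((f ((ρj (jf i) ubar (v i)).toReal) / d (jf i) (v i)) • A (jf i))) ubar := by

  classical
  -- continuity of u ↦ g j u m
  have hgc : ∀ j : Fin p, Continuous (fun u => g j u m) := by
    intro j
    have : (fun u => g j u m) = fun u => c j + A j u + ⟪b j, m⟫ := funext fun u => hg j u m
    rw [this]
    exact (continuous_const.add (A j).continuous).add continuous_const
  -- derivative candidates per sample point
  set D : Fin N → (U →L[ℝ] ℝ) := fun i =>
    if ρ ubar (v i) = ⊤ then (0 : U →L[ℝ] ℝ)
    else -((f ((ρj (jf i) ubar (v i)).toReal) / d (jf i) (v i)) • A (jf i)) with hD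
  have key : ∀ i : Fin N, HasFDerivAt (fun u => Fext (ρ u (v i))) (D i) ubar := by
    intro i
    by_cases htop : ρ ubar (v i) = ⊤
    · -- all directions non-positive: the function is constantly 1
      have hall : ∀ j, ¬ 0 < d j (v i) := by
        intro j hj
        have h1 : ρj j ubar (v i) = ⊤ := by
          have h2 : (⨅ j, ρj j ubar (v i)) = ⊤ := by rw [← hρ]; exact htop
          exact iInf_eq_top.mp h2 j
        rw [hρj, if_pos hj] at h1
        exact ENNReal.ofReal_ne_top h1
      have hconst : (fun u => Fext (ρ u (v i))) = fun _ => (1 : ℝ) := by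
        funext u
        have h3 : ρ u (v i) = ⊤ := by
          rw [hρ]; exact iInf_eq_top.mpr fun j => by rw [hρj, if_neg (hall j)]
        rw [hFext, h3, if_pos rfl]
      rw [hD]
      simp only [if_pos htop]
      rw [hconst]
      exact hasFDerivAt_const 1 ubar
    · have hj0 := hjf i htop
      set j0 := jf i with hj0def
      have hd0 : 0 < d j0 (v i) := by
        by_contra hnd
        rw [hρj, if_neg hnd] at hj0
        exact htop hj0
      set dv : ℝ := d j0 (v i) with hdv
      set h : U → ℝ := fun u => -(g j0 u m) / dv with hh
      -- value at ubar
      have hρj0 : ρj j0 ubar (v i) = ENNReal.ofReal (h ubar) := by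
        rw [hρj, if_pos hd0]
      have hhpos : 0 < h ubar := div_pos (neg_pos.mpr (hslater j0)) hd0
      have htore : (ρj j0 ubar (v i)).toReal = h ubar := by
        rw [hρj0, ENNReal.toReal_ofReal hhpos.le]
      -- strict minimality at ubar
      have hstrict : ∀ j, j ≠ j0 → 0 < d j (v i) →
          h ubar < -(g j ubar m) / d j (v i) := by
        intro j hne hdj
        have hle : ρ ubar (v i) ≤ ρj j ubar (v i) := by
          rw [hρ]; exact iInf_le _ j
        have hlt : ρ ubar (v i) < ρj j ubar (v i) := by
          rcases lt_or_eq_of_le hle with h1 | h1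
          · exact h1
          · exfalso
            obtain ⟨j', hj', huq⟩ := huniq i htop
            exact hne ((huq j h1).trans (huq j0 hj0).symm)
        rw [hj0, hρj0, hρj, if_pos hdj] at hlt
        have hrp : 0 < -(g j ubar m) / d j (v i) :=
          div_pos (neg_pos.mpr (hslater j)) hdj
        exact (ENNReal.ofReal_lt_ofReal_iff hrp).mp hlt
      -- eventual equality with F ∘ h
      have hev : ∀ᶠ u in nhds ubar, ((∀ j, g j u m < 0) ∧
          (∀ j, j ≠ j0 → 0 < d j (v i) → h u < -(g j u m) / d j (v i))) := by
        have hc1 : ∀ᶠ u in nhds ubar, ∀ j, g j u m < 0 :=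
          Filter.eventually_all.mpr fun j =>
            ((hgc j).tendsto ubar).eventually_lt_const (hslater j)
        have hc2 : ∀ᶠ u in nhds ubar, ∀ j, j ≠ j0 → 0 < d j (v i) →
            h u < -(g j u m) / d j (v i) := by
          refine Filter.eventually_all.mpr fun j => ?_
          by_cases hne : j ≠ j0
          · by_cases hdj : 0 < d j (v i)
            · have hch : Continuous h := by
                rw [hh]; exact (hgc j0).neg.div_const dv
              have hcr : Continuous (fun u => -(g j u m) / d j (v i)) :=
                (hgc j).neg.div_const _
              have := (hch.tendsto ubar).eventually_lt (hcr.tendsto ubar)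
                (hstrict j hne hdj)
              exact this.mono fun u hu _ _ => hu
            · exact Filter.Eventually.of_forall fun u _ hdj' => absurd hdj' hdj
          · exact Filter.Eventually.of_forall fun u hne' => absurd hne' hne
        exact hc1.and hc2
      -- on this neighbourhood, Fext (ρ u (v i)) = F (h u)
      have heq : (fun u => Fext (ρ u (v i))) =ᶠ[nhds ubar] fun u => F (h u) := by
        refine hev.mono fun u hu => ?_
        obtain ⟨hu1, hu2⟩ := hu
        have hρeq : ρ u (v i) = ENNReal.ofReal (h u) := by
          rw [hρ]
          apply le_antisymm
          · have : ρj j0 u (v i) = ENNReal.ofReal (h u) := by rw [hρj, if_pos hd0]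
            exact this ▸ iInf_le _ j0
          · refine le_iInf fun j => ?_
            rw [hρj]
            by_cases hdj : 0 < d j (v i)
            · rw [if_pos hdj]
              by_cases hne : j = j0
              · subst hne; rfl
              · exact ENNReal.ofReal_le_ofReal (hu2 j hne hdj).le
            · rw [if_neg hdj]; exact le_top
        have hhu : 0 ≤ h u := (div_pos (neg_pos.mpr (hu1 j0)) hd0).le
        show Fext (ρ u (v i)) = F (h u)
        rw [hρeq, hFext, if_neg ENNReal.ofReal_ne_top, ENNReal.toReal_ofReal hhu]
      -- derivative of h
      have hgd : HasFDerivAt (fun u => g j0 u m) (A j0) ubar := by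
        have hfe : (fun u => g j0 u m) = fun u => c j0 + A j0 u + ⟪b j0, m⟫ :=
          funext fun u => hg j0 u m
        rw [hfe]
        exact HasFDerivAt.congr_fderiv (((hasFDerivAt_const (c j0) ubar).add (A j0).hasFDerivAt).add
          (hasFDerivAt_const (⟪b j0, m⟫ : ℝ) ubar)) (by simp)
      have hhd : HasFDerivAt h ((-dv⁻¹) • A j0) ubar := by
        have : h = fun u => (-dv⁻¹) * g j0 u m := by
          funext u; rw [hh]; ring
        rw [this]
        exact hgd.const_mul _
      have hFd : HasDerivAt F (f (h ubar)) (h ubar) := by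
        rw [hf]
        exact (hF.differentiable one_ne_zero (h ubar)).hasDerivAt
      have hcomp := hFd.comp_hasFDerivAt ubar hhd
      have hD' : D i = -((f ((ρj (jf i) ubar (v i)).toReal) / d (jf i) (v i)) • A (jf i)) := by
        rw [hD]; simp only [if_neg htop]
      rw [hD']
      refine (HasFDerivAt.congr_of_eventuallyEq ?_ heq)
      have hder : f (h ubar) • ((-dv⁻¹) • A j0) =
          -((f ((ρj (jf i) ubar (v i)).toReal) / d (jf i) (v i)) • A (jf i)) := by
        rw [smul_smul, htore, ← hj0def, ← hdv]
        ext x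
        simp only [ContinuousLinearMap.smul_apply, ContinuousLinearMap.neg_apply, smul_eq_mul]
        ring
      exact hder ▸ hcomp
  -- sum up
  have hsum : HasFDerivAt (fun u => ∑ i, Fext (ρ u (v i))) (∑ i, D i) ubar :=
    HasFDerivAt.fun_sum fun i _ => key i
  have hmul := hsum.const_mul ((N : ℝ)⁻¹)
  have hφeq : φ = fun u => (N : ℝ)⁻¹ * ∑ i, Fext (ρ u (v i)) := funext hφ
  rw [hφeq]
  have hfin : (N : ℝ)⁻¹ • (∑ i, D i) =
      -(N : ℝ)⁻¹ • ∑ i ∈ Finset.univ.filter (fun i => ρ ubar (v i) ≠ ⊤),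
        ((f ((ρj (jf i) ubar (v i)).toReal) / d (jf i) (v i)) • A (jf i)) := by
    have h1 : (∑ i, D i) = ∑ i ∈ Finset.univ.filter (fun i => ρ ubar (v i) ≠ ⊤), D i :=
      (Finset.sum_filter_of_ne fun i _ hne => by
        intro htop; exact hne (by rw [hD]; simp only [if_pos htop])).symm
    have h2 : ∑ i ∈ Finset.univ.filter (fun i => ρ ubar (v i) ≠ ⊤), D i =
        -∑ i ∈ Finset.univ.filter (fun i => ρ ubar (v i) ≠ ⊤),
          ((f ((ρj (jf i) ubar (v i)).toReal) / d (jf i) (v i)) • A (jf i)) := by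
      rw [← Finset.sum_neg_distrib]
      refine Finset.sum_congr rfl fun i hi => ?_
      have htop : ρ ubar (v i) ≠ ⊤ := (Finset.mem_filter.mp hi).2
      rw [hD]; simp only [if_neg htop]
    rw [h1, h2, smul_neg, ← neg_smul]
  rw [← hfin]
  exact hmul
end
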